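/- arXiv:2009.01504 — 4 statements merged into one kernel-verified Lean document; each statement's English description precedes it below -/
import Mathlib

section
/- For every real α with 1 < α < 2, the series B_∞ = Σ_{m=1}^∞ B_{m,1}/m! converges, and for all integers n ≥ 1 and 1 ≤ k ≤ n one has the two inequalities B_{n,k}/n! ≤ (B_∞)^k/k! and (B_∞)^k/k! ≤ (1/4)^k/k!. -/
/-!
Write `b_m = B_{m,1}/m!`. Since `0 < 2 - α < 1`, `(2-α)_{m-1} ≤ (m-1)!`, so
`b_m ≤ 1/(m(m+1)(m+2))`, and these bounds telescope to `1/4`; hence `B_∞ = Σ b_m ≤ 1/4`.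
Dividing the recursion by `n!` makes it a convolution,
`B_{n,k+1}/n! = (1/(k+1)) Σ_l b_{n-l} · B_{l,k}/l!` (so `B_{n,k}/n!` is the `n`-th coefficient of
`(Σ b_m x^m)^k / k!`), and induction on `k` bounds it by `(1/(k+1)) · B_∞ · B_∞^k/k!`.
-/

open scoped Real BigOperators
open MeasureTheory Filter Asymptotics

/-- `B_{n,1} = (2-α)_{n-1} / ((n+1)(n+2))`, where `(x)_m` is the rising factorial. -/
noncomputable def B1 (α : ℝ) (n : ℕ) : ℝ :=
  (ascPochhammer ℝ (n - 1)).eval (2 - α) / ((n + 1 : ℝ) * (n + 2 : ℝ))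

/-- The coefficients `B_{n,k}`: `B_{n,1}` as above and
`B_{n,k+1} = (1/(k+1)) Σ_{l=k}^{n-1} C(n,l) B_{n-l,1} B_{l,k}` for `k ≥ 1`. -/
noncomputable def Bc (α : ℝ) : ℕ → ℕ → ℝ
  | _, 0 => 0
  | n, 1 => B1 α n
  | n, (k + 2) =>
      (1 / (k + 2 : ℝ)) *
        ∑ l ∈ Finset.Icc (k + 1) (n - 1),
          (n.choose l : ℝ) * B1 α (n - l) * Bc α l (k + 1)

theorem ascPochhammer_eval_le_eval {S : Type*} [Semiring S] [PartialOrder S]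
    [IsStrictOrderedRing S] {x y : S} (hx : 0 < x) (hxy : x ≤ y) (n : ℕ) :
    (ascPochhammer S n).eval x ≤ (ascPochhammer S n).eval y := by
  induction n with
  | zero => simp
  | succ n ih =>
    rw [ascPochhammer_succ_eval, ascPochhammer_succ_eval]
    exact mul_le_mul ih (add_le_add_left hxy _) (by positivity)
      (ascPochhammer_pos n y (hx.trans_le hxy)).le

theorem sum_range_one_div_mul_mul_mul (N : ℕ) :
    ∑ m ∈ Finset.range N, 1 / (((m : ℝ) + 1) * (m + 2) * (m + 3)) =
      1 / 4 - 1 / (2 * ((N : ℝ) + 1) * (N + 2)) := by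
  induction N with
  | zero => norm_num
  | succ N ih =>
    rw [Finset.sum_range_succ, ih]
    push_cast
    field_simp
    ring

section

variable {α : ℝ}

theorem B1_nonneg (hα₂ : α < 2) (n : ℕ) : 0 ≤ B1 α n :=
  div_nonneg (ascPochhammer_pos _ _ (by linarith)).le (by positivity)

theorem B1_succ_div_factorial_le (hα₁ : 1 < α) (hα₂ : α < 2) (m : ℕ) :
    B1 α (m + 1) / (m + 1).factorial ≤ 1 / (((m : ℝ) + 1) * (m + 2) * (m + 3)) := by
  have hpoch : (ascPochhammer ℝ m).eval (2 - α) ≤ m.factorial := by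
    simpa using ascPochhammer_eval_le_eval (S := ℝ) (by linarith) (by linarith : 2 - α ≤ 1) m
  rw [B1, Nat.add_sub_cancel, Nat.factorial_succ, div_div, div_le_div_iff₀ (by positivity)
    (by positivity)]
  push_cast
  have hfac : (0 : ℝ) < m.factorial := by positivity
  nlinarith [mul_le_mul_of_nonneg_right hpoch
    (by positivity : (0 : ℝ) ≤ ((m : ℝ) + 1) * (m + 2) * (m + 3))]

theorem B1_succ_div_factorial_nonneg (hα₂ : α < 2) (m : ℕ) :
    0 ≤ B1 α (m + 1) / (m + 1).factorial :=
  div_nonneg (B1_nonneg hα₂ _) (by positivity)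

theorem sum_range_B1_succ_div_factorial_le (hα₁ : 1 < α) (hα₂ : α < 2) (N : ℕ) :
    ∑ m ∈ Finset.range N, B1 α (m + 1) / (m + 1).factorial ≤ 1 / 4 :=
  calc ∑ m ∈ Finset.range N, B1 α (m + 1) / (m + 1).factorial
      ≤ ∑ m ∈ Finset.range N, 1 / (((m : ℝ) + 1) * (m + 2) * (m + 3)) :=
        Finset.sum_le_sum fun m _ => B1_succ_div_factorial_le hα₁ hα₂ m
    _ ≤ 1 / 4 := by
        rw [sum_range_one_div_mul_mul_mul]
        linarith [(by positivity : (0 : ℝ) < 1 / (2 * ((N : ℝ) + 1) * (N + 2)))]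

theorem summable_Bc_one_div_factorial (hα₁ : 1 < α) (hα₂ : α < 2) :
    Summable (fun m : ℕ => Bc α (m + 1) 1 / (m + 1).factorial) :=
  summable_of_sum_range_le (B1_succ_div_factorial_nonneg hα₂)
    (sum_range_B1_succ_div_factorial_le hα₁ hα₂)

noncomputable def Binfty (α : ℝ) : ℝ :=
  ∑' m : ℕ, Bc α (m + 1) 1 / (m + 1).factorial

theorem Binfty_nonneg (hα₂ : α < 2) : 0 ≤ Binfty α :=
  tsum_nonneg (B1_succ_div_factorial_nonneg hα₂)

theorem Binfty_le_one_quarter (hα₁ : 1 < α) (hα₂ : α < 2) : Binfty α ≤ 1 / 4 :=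
  Real.tsum_le_of_sum_range_le (B1_succ_div_factorial_nonneg hα₂)
    (sum_range_B1_succ_div_factorial_le hα₁ hα₂)

theorem sum_B1_div_factorial_le_Binfty (hα₁ : 1 < α) (hα₂ : α < 2) {s : Finset ℕ}
    (hs : 0 ∉ s) : ∑ m ∈ s, B1 α m / m.factorial ≤ Binfty α := by
  rw [← Finset.sum_preimage Nat.succ s Nat.succ_injective.injOn _ fun m hm hmr =>
    absurd (Nat.exists_eq_add_one_of_ne_zero (ne_of_mem_of_not_mem hm hs))
      (by simpa [eq_comm] using hmr)]
  exact (summable_Bc_one_div_factorial hα₁ hα₂).sum_le_tsum _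
    fun m _ => B1_succ_div_factorial_nonneg hα₂ m

theorem Bc_add_two_div_factorial (n k : ℕ) :
    Bc α n (k + 2) / n.factorial = 1 / (k + 2 : ℝ) *
      ∑ l ∈ Finset.Icc (k + 1) (n - 1),
        B1 α (n - l) / (n - l).factorial * (Bc α l (k + 1) / l.factorial) := by
  rw [Bc, mul_div_assoc, Finset.sum_div]
  congr 1
  refine Finset.sum_congr rfl fun l hl => ?_
  have hln : l ≤ n := by grind
  rw [← Nat.choose_mul_factorial_mul_factorial hln]
  have hchoose : (n.choose l : ℝ) ≠ 0 := Nat.cast_ne_zero.mpr (Nat.choose_pos hln).ne'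
  push_cast
  field_simp

theorem sum_Icc_B1_sub_div_factorial_le_Binfty (hα₁ : 1 < α) (hα₂ : α < 2) (n : ℕ) {a : ℕ}
    (ha : 1 ≤ a) :
    ∑ l ∈ Finset.Icc a (n - 1), B1 α (n - l) / (n - l).factorial ≤ Binfty α := by
  rw [← Finset.sum_image (f := fun m => B1 α m / m.factorial) (g := (n - ·))
    (by intro x hx y hy; grind)]
  exact sum_B1_div_factorial_le_Binfty hα₁ hα₂ (by grind)

theorem Bc_div_factorial_le (hα₁ : 1 < α) (hα₂ : α < 2) {n : ℕ} (hn : 1 ≤ n) :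
    ∀ k : ℕ, Bc α n k / n.factorial ≤ Binfty α ^ k / k.factorial
  | 0 => by simp [Bc]
  | 1 => by
    obtain ⟨m, rfl⟩ := Nat.exists_eq_add_of_le' hn
    simpa [Binfty] using (summable_Bc_one_div_factorial hα₁ hα₂).le_tsum m
      fun j _ => B1_succ_div_factorial_nonneg hα₂ j
  | k + 2 => by
    set B := Binfty α
    have hB : 0 ≤ B := Binfty_nonneg hα₂
    calc Bc α n (k + 2) / n.factorial
        = 1 / (k + 2 : ℝ) * ∑ l ∈ Finset.Icc (k + 1) (n - 1),
            B1 α (n - l) / (n - l).factorial * (Bc α l (k + 1) / l.factorial) :=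
          Bc_add_two_div_factorial n k
      _ ≤ 1 / (k + 2 : ℝ) * ∑ l ∈ Finset.Icc (k + 1) (n - 1),
            B1 α (n - l) / (n - l).factorial * (B ^ (k + 1) / (k + 1).factorial) := by
          gcongr _ * ∑ l ∈ _, _ * ?_ with l hl
          · exact div_nonneg (B1_nonneg hα₂ _) (by positivity)
          · exact Bc_div_factorial_le hα₁ hα₂ (n := l) (by grind) (k + 1)
      _ ≤ 1 / (k + 2 : ℝ) * (B * (B ^ (k + 1) / (k + 1).factorial)) := by
          rw [← Finset.sum_mul]
          gcongr
          exact sum_Icc_B1_sub_div_factorial_le_Binfty hα₁ hα₂ n (by omega)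
      _ = B ^ (k + 2) / (k + 2).factorial := by
          rw [Nat.factorial_succ (k + 1)]
          push_cast
          field_simp
          ring

end

/-- For `1 < α < 2`, the series `B_∞ = Σ_{m≥1} B_{m,1}/m!` converges, and for
all `n ≥ 1` and `1 ≤ k ≤ n` one has `B_{n,k}/n! ≤ B_∞^k/k!` and `B_∞^k/k! ≤ (1/4)^k/k!`. -/
theorem Bck_le_Binfty (α : ℝ) (hα₁ : 1 < α) (hα₂ : α < 2) :
    Summable (fun m : ℕ => Bc α (m + 1) 1 / (m + 1).factorial) ∧
    ∀ n k : ℕ, 1 ≤ n → 1 ≤ k → k ≤ n →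
      Bc α n k / n.factorial ≤
          (∑' m : ℕ, Bc α (m + 1) 1 / (m + 1).factorial) ^ k / k.factorial ∧
      (∑' m : ℕ, Bc α (m + 1) 1 / (m + 1).factorial) ^ k / k.factorial ≤
          (1 / 4 : ℝ) ^ k / k.factorial := by
  refine ⟨summable_Bc_one_div_factorial hα₁ hα₂, fun n k hn _ _ =>
    ⟨Bc_div_factorial_le hα₁ hα₂ hn k, ?_⟩⟩
  have hB : 0 ≤ Binfty α := Binfty_nonneg hα₂
  gcongr
  exact Binfty_le_one_quarter hα₁ hα₂
end

section
/- For every real α with 1 < α < 2, all the numbers B_{n,k} with n ≥ 1 and 1 ≤ k ≤ n are nonnegative, and consequently c_p^{(α)} > 0 for every integer p ≥ 0. -/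
/-!
Since `2 - α > 0`, the rising factorial `(2-α)_{n-1}` is positive, so every `B_{n,1}` is positive;
the recursion for `B_{n,k+1}` only multiplies and adds such numbers, so induction on `k` gives
`B_{n,k} ≥ 0`. In `c_p` every summand is then nonnegative because `2(α-1) > 0` and `Γ > 0` on
positive reals, and the summand `k = 1` is strictly positive.
-/

open scoped Real BigOperators
open MeasureTheory Filter Asymptotics

/-- The coefficients `c_p^{(α)}`. -/
noncomputable def cC (α : ℝ) : ℕ → ℝ
  | 0 => 1
  | p + 1 =>
      (1 / ((2 * (p + 1)).factorial * Real.sqrt Real.pi)) * (2 / α) ^ (p + 1) *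
        ∑ k ∈ Finset.Icc 1 (2 * (p + 1)),
          Bc α (2 * (p + 1)) k * Real.Gamma ((p + 1 : ℝ) + k + 1 / 2) *
            (2 * (α - 1)) ^ k

section

variable {α : ℝ}

lemma B1_pos (hα : α < 2) (n : ℕ) : 0 < B1 α n :=
  div_pos (ascPochhammer_pos _ _ (by linarith)) (by positivity)

lemma Bc_one (α : ℝ) (n : ℕ) : Bc α n 1 = B1 α n := rfl

lemma Bc_nonneg (hα : α < 2) (n k : ℕ) : 0 ≤ Bc α n k := by
  induction k using Nat.strong_induction_on generalizing n with
  | _ k ih =>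
    match k with
    | 0 => simp [Bc]
    | 1 => exact (B1_pos hα n).le
    | k + 2 =>
      rw [Bc]
      refine mul_nonneg (by positivity) (Finset.sum_nonneg fun l _ => ?_)
      exact mul_nonneg (mul_nonneg (by positivity) (B1_pos hα _).le) (ih (k + 1) (by omega) l)

lemma cC_summand_nonneg (hα₁ : 1 < α) (hα₂ : α < 2) (p k : ℕ) :
    0 ≤ Bc α (2 * (p + 1)) k * Real.Gamma ((p + 1 : ℝ) + k + 1 / 2) * (2 * (α - 1)) ^ k := by
  have hGamma : 0 < Real.Gamma ((p + 1 : ℝ) + k + 1 / 2) := Real.Gamma_pos_of_pos (by positivity)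
  have hbase : (0 : ℝ) ≤ 2 * (α - 1) := by linarith
  exact mul_nonneg (mul_nonneg (Bc_nonneg hα₂ _ k) hGamma.le) (pow_nonneg hbase k)

lemma cC_summand_one_pos (hα₁ : 1 < α) (hα₂ : α < 2) (p : ℕ) :
    0 < Bc α (2 * (p + 1)) 1 * Real.Gamma ((p + 1 : ℝ) + 1 + 1 / 2) * (2 * (α - 1)) ^ 1 := by
  have hGamma : 0 < Real.Gamma ((p + 1 : ℝ) + 1 + 1 / 2) := Real.Gamma_pos_of_pos (by positivity)
  have hbase : (0 : ℝ) < 2 * (α - 1) := by linarith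
  have hB := B1_pos hα₂ (2 * (p + 1))
  rw [Bc_one]
  positivity

lemma cC_pos (hα₁ : 1 < α) (hα₂ : α < 2) (p : ℕ) : 0 < cC α p := by
  cases p with
  | zero => norm_num [cC]
  | succ p =>
    have hα : 0 < α := by linarith
    have hπ : 0 < Real.sqrt π := Real.sqrt_pos.mpr Real.pi_pos
    rw [cC]
    refine mul_pos (by positivity) (Finset.sum_pos' (fun k _ => cC_summand_nonneg hα₁ hα₂ p k) ?_)
    exact ⟨1, Finset.mem_Icc.mpr ⟨le_rfl, by omega⟩, by exact_mod_cast cC_summand_one_pos hα₁ hα₂ p⟩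

end

/-- For `1 < α < 2`, all the `B_{n,k}` with `1 ≤ k ≤ n` are nonnegative, and
consequently `c_p^{(α)} > 0` for every `p ≥ 0`. -/
theorem Bck_nonneg_and_cC_pos (α : ℝ) (hα₁ : 1 < α) (hα₂ : α < 2) :
    (∀ n k : ℕ, 1 ≤ n → 1 ≤ k → k ≤ n → 0 ≤ Bc α n k) ∧
    ∀ p : ℕ, 0 < cC α p :=
  ⟨fun n k _ _ _ => Bc_nonneg hα₂ n k, cC_pos hα₁ hα₂⟩
end

section
/- Take α = 2 in the definitions of B_{n,k} and c_p^{(α)} (so that B_{n,1} = 0 for every n ≥ 2 while B_{1,1} = 1/6). Then for every integer n ≥ 1: c_n^{(2)} = (1/((2n)! √π)) · (1/3)^{2n} · Γ(3n + 1/2). -/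
open scoped Real BigOperators
open MeasureTheory Filter Asymptotics

/-!
At `α = 2` the Pochhammer factor `(2 - α)_{n-1} = (0)_{n-1}` kills `B_{n,1}` for `n ≥ 2`, so in the
recursion for `B_{n,k+1}` only the term `l = n - 1` can survive, and only when `l = k`. By induction,
`B_{n,k} = 6^{-n}` if `k = n` and `0` otherwise; hence the sum defining `c_n^{(2)}` reduces to its
last term `6^{-2n} Γ(3n + 1/2) 2^{2n}`, while the prefactor `(2/α)^n` is `1`.
-/

open Finset

lemma B1_two_one : B1 2 1 = 6⁻¹ := by
  norm_num [B1]

lemma B1_two_of_two_le {n : ℕ} (hn : 2 ≤ n) : B1 2 n = 0 := by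
  simp [B1, show n - 1 ≠ 0 by omega]

lemma Bc_two_succ (k : ℕ) {n : ℕ} (hn : 1 ≤ n) :
    Bc 2 n (k + 1) = if n = k + 1 then (6⁻¹ : ℝ) ^ n else 0 := by
  induction k generalizing n with
  | zero =>
    rcases hn.eq_or_lt with rfl | hn
    · simp [Bc, B1_two_one]
    · simp [Bc, B1_two_of_two_le hn, hn.ne']
  | succ k ih =>
    rw [Bc]
    by_cases hnk : n = k + 2
    · subst hnk
      have hchoose : ((k + 2).choose (k + 1) : ℝ) = k + 2 := by
        rw [Nat.choose_succ_self_right]; push_cast; ring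
      rw [show k + 2 - 1 = k + 1 by omega, Icc_self, sum_singleton, ih (by omega),
        if_pos rfl, if_pos rfl, hchoose, show k + 2 - (k + 1) = 1 by omega, B1_two_one]
      field_simp
      ring
    · rw [if_neg hnk, sum_eq_zero, mul_zero]
      intro l hl
      rw [mem_Icc] at hl
      rw [ih (by omega)]
      split_ifs with hlk
      · rw [B1_two_of_two_le (by omega), mul_zero, zero_mul]
      · rw [mul_zero]

lemma sum_Bc_two_mul {n : ℕ} (hn : 1 ≤ n) (f : ℕ → ℝ) :
    ∑ k ∈ Icc 1 n, Bc 2 n k * f k = (6⁻¹ : ℝ) ^ n * f n := by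
  rw [sum_eq_single_of_mem n (mem_Icc.mpr ⟨hn, le_rfl⟩)]
  · obtain ⟨k, rfl⟩ := Nat.exists_eq_add_of_le' hn
    rw [Bc_two_succ k hn, if_pos rfl]
  · intro k hk hkn
    obtain ⟨j, rfl⟩ := Nat.exists_eq_add_of_le' (mem_Icc.mp hk).1
    rw [Bc_two_succ j hn, if_neg (Ne.symm hkn), zero_mul]

theorem cC_two_general (n : ℕ) :
    cC 2 n =
      (1 / ((2 * n).factorial * Real.sqrt Real.pi)) * (1 / 3 : ℝ) ^ (2 * n) *
        Real.Gamma (3 * (n : ℝ) + 1 / 2) := by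
  cases n with
  | zero =>
    have hsqrt : Real.sqrt π ≠ 0 := Real.sqrt_ne_zero'.mpr Real.pi_pos
    norm_num [cC, Real.Gamma_one_half_eq, hsqrt]
  | succ p =>
    rw [cC]
    simp_rw [mul_assoc (Bc _ _ _)]
    rw [sum_Bc_two_mul (by omega)]
    have hpow : (6⁻¹ : ℝ) ^ (2 * (p + 1)) * (2 * (2 - 1)) ^ (2 * (p + 1)) =
        (1 / 3) ^ (2 * (p + 1)) := by
      rw [← mul_pow]; norm_num
    rw [← hpow]
    push_cast
    ring_nf

/-- With `α = 2` in the definitions of `B_{n,k}` and `c_p^{(α)}`, for every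
`n ≥ 1`: `c_n^{(2)} = (1/((2n)! √π)) (1/3)^{2n} Γ(3n + 1/2)`. -/
theorem cC_two (n : ℕ) (hn : 1 ≤ n) :
    cC 2 n =
      (1 / ((2 * n).factorial * Real.sqrt Real.pi)) * (1 / 3 : ℝ) ^ (2 * n) *
        Real.Gamma (3 * (n : ℝ) + 1 / 2) :=
  cC_two_general n
end

section
/- The function Ψ_2 satisfies the inhomogeneous Airy differential equation: for every real λ, Ψ_2″(λ) = λ · Ψ_2(λ) − 1/π. -/
open scoped Real BigOperators
open MeasureTheory Filter Asymptotics

/-- The companion function `Ψ_α` (with cosine in place of sine). -/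
noncomputable def Psi (α : ℝ) (x : ℝ) : ℝ :=
  (1 / Real.pi) * ∑' n : ℕ,
    ((-1 : ℝ) ^ n / n.factorial) * Real.Gamma ((1 + n) / (1 + α)) *
      Real.cos (Real.pi * (1 + n) / (α + 1)) *
      (1 + α) ^ (((n : ℝ) - α) / (1 + α)) * x ^ n

/-!
Write `Ψ₂(x) = ∑ cₙ xⁿ`. From `Γ(s + 1) = s Γ(s)`, `cos (θ + π) = -cos θ` and the factor
`3^{n/3}`, the coefficients satisfy the Airy recurrence `(n + 3)(n + 2) cₙ₊₃ = cₙ`, and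
`2 c₂ = -1/π`. The recurrence makes the ratio test along each residue class mod 3 succeed for
every radius, so the series is entire and may be differentiated termwise twice; the recurrence
then turns `∑ (n + 2)(n + 1) cₙ₊₂ xⁿ` into `2 c₂ + x ∑ cₙ xⁿ`.
-/

theorem summable_of_ratio_norm_add_eventually_le {E : Type*} [NormedAddCommGroup E]
    [CompleteSpace E] {f : ℕ → E} {m : ℕ} (hm : 0 < m) {r : ℝ} (hr : r < 1)
    (h : ∀ᶠ n in atTop, ‖f (n + m)‖ ≤ r * ‖f n‖) : Summable f := by
  have : NeZero m := ⟨hm.ne'⟩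
  refine (summable_sum fun k _ => ?_).congr fun n =>
    ((Finset.sum_apply n _ _).symm.trans (congr_fun (Finset.sum_indicator_mod m f) n).symm)
  rw [← ZMod.natCast_zmod_val k, summable_indicator_mod_iff_summable]
  have hk : Tendsto (fun n => m * n + k.val) atTop atTop :=
    tendsto_atTop_mono (fun n => (Nat.le_mul_of_pos_left n hm).trans (Nat.le_add_right _ _))
      tendsto_id
  refine summable_of_ratio_norm_eventually_le hr ?_
  filter_upwards [hk.eventually h] with n hn
  rwa [show m * (n + 1) + k.val = m * n + k.val + m by ring]

noncomputable def derivCoeff (a : ℕ → ℝ) (n : ℕ) : ℝ := (n + 1) * a (n + 1)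

section PowerSeries

variable {a : ℕ → ℝ}

lemma summable_norm_derivCoeff_mul_pow (ha : ∀ x : ℝ, Summable fun n => ‖a n * x ^ n‖)
    (x : ℝ) : Summable fun n => ‖derivCoeff a n * x ^ n‖ := by
  refine ((summable_nat_add_iff 1).mpr (ha (2 * (‖x‖ + 1)))).of_nonneg_of_le
    (fun _ => norm_nonneg _) fun n => ?_
  have hn : ((n : ℝ) + 1) ≤ 2 ^ (n + 1) := by exact_mod_cast (Nat.lt_two_pow_self (n := n + 1)).le
  have hx : ‖x‖ ^ n ≤ (‖x‖ + 1) ^ (n + 1) := calc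
    ‖x‖ ^ n ≤ (‖x‖ + 1) ^ n := by gcongr; linarith
    _ ≤ (‖x‖ + 1) ^ (n + 1) := pow_le_pow_right₀ (by linarith [norm_nonneg x]) n.le_succ
  simp only [derivCoeff, norm_mul, norm_pow, Real.norm_ofNat]
  rw [Real.norm_of_nonneg (by positivity : (0:ℝ) ≤ n + 1),
    Real.norm_of_nonneg (by positivity : (0:ℝ) ≤ ‖x‖ + 1), mul_pow]
  calc ((n : ℝ) + 1) * ‖a (n + 1)‖ * ‖x‖ ^ n
      = ‖a (n + 1)‖ * (((n : ℝ) + 1) * ‖x‖ ^ n) := by ring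
    _ ≤ ‖a (n + 1)‖ * (2 ^ (n + 1) * (‖x‖ + 1) ^ (n + 1)) := by gcongr

lemma hasDerivAt_tsum_mul_pow (ha : ∀ x : ℝ, Summable fun n => ‖a n * x ^ n‖) (y : ℝ) :
    HasDerivAt (fun x => ∑' n, a n * x ^ n) (∑' n, derivCoeff a n * y ^ n) y := by
  have hsplit : (fun x => ∑' n, a n * x ^ n) = fun x => a 0 + ∑' n, a (n + 1) * x ^ (n + 1) := by
    funext x
    rw [(ha x).of_norm.tsum_eq_zero_add, pow_zero, mul_one]
  rw [hsplit]
  refine HasDerivAt.const_add _ ?_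
  have hy : y ∈ Metric.ball (0 : ℝ) (‖y‖ + 1) := by simp
  refine hasDerivAt_tsum_of_isPreconnected (g := fun n x => a (n + 1) * x ^ (n + 1))
    (g' := fun n x => derivCoeff a n * x ^ n) (summable_norm_derivCoeff_mul_pow ha (‖y‖ + 1))
    Metric.isOpen_ball (convex_ball _ _).isPreconnected (fun n x _ => ?_) (fun n x hx => ?_) hy
    ((summable_nat_add_iff 1).mpr (ha y).of_norm) hy
  · simpa [derivCoeff, mul_comm, mul_left_comm, mul_assoc] using
      (hasDerivAt_pow (n + 1) x).const_mul (a (n + 1))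
  · have hx' : ‖x‖ ≤ ‖y‖ + 1 := by simpa using (Metric.mem_ball.mp hx).le
    simp only [norm_mul, norm_pow, Real.norm_of_nonneg (by positivity : (0:ℝ) ≤ ‖y‖ + 1)]
    gcongr

lemma deriv_tsum_mul_pow (ha : ∀ x : ℝ, Summable fun n => ‖a n * x ^ n‖) :
    deriv (fun x => ∑' n, a n * x ^ n) = fun x => ∑' n, derivCoeff a n * x ^ n :=
  funext fun y => (hasDerivAt_tsum_mul_pow ha y).deriv

lemma summable_norm_mul_pow_of_airy
    (h : ∀ n : ℕ, ((n : ℝ) + 3) * (n + 2) * a (n + 3) = a n) (x : ℝ) :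
    Summable fun n => ‖a n * x ^ n‖ := by
  refine summable_of_ratio_norm_add_eventually_le three_pos (by norm_num : (1 / 2 : ℝ) < 1) ?_
  filter_upwards [tendsto_natCast_atTop_atTop.eventually_ge_atTop (2 * ‖x‖ ^ 3)] with n hn
  have hpos : (0 : ℝ) < (n + 3) * (n + 2) := by positivity
  have hrec : ‖a n‖ = (n + 3) * (n + 2) * ‖a (n + 3)‖ := by
    rw [← h n, norm_mul, Real.norm_of_nonneg hpos.le]
  have hx : ‖x‖ ^ 3 ≤ (n + 3) * (n + 2) / 2 := by nlinarith
  rw [norm_norm, norm_norm, norm_mul, norm_mul, norm_pow, norm_pow, hrec, pow_add]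
  calc ‖a (n + 3)‖ * (‖x‖ ^ n * ‖x‖ ^ 3)
      ≤ ‖a (n + 3)‖ * (‖x‖ ^ n * ((n + 3) * (n + 2) / 2)) := by gcongr
    _ = 1 / 2 * ((n + 3) * (n + 2) * ‖a (n + 3)‖ * ‖x‖ ^ n) := by ring

lemma deriv_deriv_tsum_mul_pow_of_airy
    (h : ∀ n : ℕ, ((n : ℝ) + 3) * (n + 2) * a (n + 3) = a n) (x : ℝ) :
    deriv (deriv fun x => ∑' n, a n * x ^ n) x = x * ∑' n, a n * x ^ n + 2 * a 2 := by
  have ha := summable_norm_mul_pow_of_airy h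
  have ha' := summable_norm_derivCoeff_mul_pow ha
  have hshift (n : ℕ) :
      derivCoeff (derivCoeff a) (n + 1) * x ^ (n + 1) = x * (a n * x ^ n) := by
    rw [← h n, derivCoeff, derivCoeff]
    push_cast
    ring
  rw [deriv_tsum_mul_pow ha, (hasDerivAt_tsum_mul_pow ha' x).deriv,
    (summable_norm_derivCoeff_mul_pow ha' x).of_norm.tsum_eq_zero_add, tsum_congr hshift,
    tsum_mul_left]
  norm_num [derivCoeff]
  ring

end PowerSeries

open Real

noncomputable def psiTwoCoeff (n : ℕ) : ℝ :=
  π⁻¹ * ((-1) ^ n / n.factorial * Gamma ((1 + n) / 3) * cos (π * (1 + n) / 3) *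
    3 ^ (((n : ℝ) - 2) / 3))

lemma Psi_two_eq_tsum : Psi 2 = fun x => ∑' n, psiTwoCoeff n * x ^ n := by
  funext x
  rw [Psi, ← tsum_mul_left]
  congr 1 with n
  norm_num [psiTwoCoeff]
  ring

lemma psiTwoCoeff_airy (n : ℕ) :
    ((n : ℝ) + 3) * (n + 2) * psiTwoCoeff (n + 3) = psiTwoCoeff n := by
  have hfac : ((n + 3).factorial : ℝ) = (n + 3) * (n + 2) * (n + 1) * n.factorial := by
    push_cast [Nat.factorial_succ]; ring
  have hGamma : Gamma ((1 + (n + 3 : ℕ)) / 3) = (1 + n) / 3 * Gamma ((1 + n) / 3) := by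
    rw [← Gamma_add_one (by positivity)]; push_cast; ring_nf
  have hcos : cos (π * (1 + (n + 3 : ℕ)) / 3) = -cos (π * (1 + n) / 3) := by
    rw [← cos_add_pi]; push_cast; ring_nf
  have hpow : (3 : ℝ) ^ ((((n + 3 : ℕ) : ℝ) - 2) / 3) = 3 * 3 ^ (((n : ℝ) - 2) / 3) := by
    rw [show (((n + 3 : ℕ) : ℝ) - 2) / 3 = 1 + ((n : ℝ) - 2) / 3 by push_cast; ring,
      rpow_add three_pos, rpow_one]
  rw [psiTwoCoeff, psiTwoCoeff, hfac, hGamma, hcos, hpow, pow_add]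
  field_simp
  ring

lemma two_mul_psiTwoCoeff_two : 2 * psiTwoCoeff 2 = -(1 / π) := by
  norm_num [psiTwoCoeff]
  ring

/-- `Ψ₂` satisfies the inhomogeneous Airy equation:
`Ψ₂''(λ) = λ Ψ₂(λ) − 1/π` for all `λ`. -/
theorem psi_two_airy (l : ℝ) : deriv (deriv (Psi 2)) l = l * Psi 2 l - 1 / Real.pi := by
  rw [Psi_two_eq_tsum, deriv_deriv_tsum_mul_pow_of_airy psiTwoCoeff_airy,
    two_mul_psiTwoCoeff_two, sub_eq_add_neg]
end
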